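/- For every real w one has (cosh(K + A(w)) + cosh(−K + A(w)))·exp(B(w)) = λ·cosh(w); equivalently, for each fixed w the two numbers (1/λ)·cosh(±K + A(w))·exp(B(w))/cosh(w) are positive and sum to 1. -/
import Mathlib

lemma aux_exp_sum (c1 c2 : ℝ) (h1 : 0 < c1) (h2 : 0 < c2) :
    Real.exp ((1/2) * Real.log (c1/c2) + (1/2) * Real.log (4*c1*c2)) = 2*c1 := by
  have hm : (c1/c2) * (4*c1*c2) = (2*c1)^2 := by field_simp; ring
  rw [← mul_add, ← Real.log_mul (by positivity) (by positivity), hm, Real.log_pow]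
  push_cast
  rw [show (1/2 : ℝ) * (2 * Real.log (2*c1)) = Real.log (2*c1) by ring,
    Real.exp_log (by positivity)]

lemma aux_exp_diff (c1 c2 : ℝ) (h1 : 0 < c1) (h2 : 0 < c2) :
    Real.exp ((1/2) * Real.log (4*c1*c2) - (1/2) * Real.log (c1/c2)) = 2*c2 := by
  have hm : (4*c1*c2) / (c1/c2) = (2*c2)^2 := by field_simp; ring
  rw [← mul_sub, ← Real.log_div (by positivity) (by positivity), hm, Real.log_pow]
  push_cast
  rw [show (1/2 : ℝ) * (2 * Real.log (2*c2)) = Real.log (2*c2) by ring,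
    Real.exp_log (by positivity)]

/-- For every real `w` one has
`(cosh(K + A(w)) + cosh(−K + A(w)))·exp(B(w)) = λ·cosh(w)`; equivalently, for each
fixed `w` the two numbers `(1/λ)·cosh(±K + A(w))·exp(B(w))/cosh(w)` are positive and
sum to 1. -/
theorem stmt_11 (p ε : ℝ) (hp0 : 0 < p) (hp1 : p < 1) (hε0 : 0 < ε) (hε1 : ε < 1)
    (J K lam : ℝ)
    (hJ : J = (1 / 2) * Real.log ((1 - p) / p))
    (hK : K = (1 / 2) * Real.log ((1 - ε) / ε))
    (hlam : lam = 4 * Real.cosh J * Real.cosh K)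
    (A B : ℝ → ℝ)
    (hA : ∀ u, A u = (1 / 2) * Real.log (Real.cosh (u + J) / Real.cosh (u - J)))
    (hB : ∀ u, B u = (1 / 2) * Real.log (4 * Real.cosh (u + J) * Real.cosh (u - J))) :
    ∀ w : ℝ,
      ((Real.cosh (K + A w) + Real.cosh (-K + A w)) * Real.exp (B w)
          = lam * Real.cosh w) ∧
      0 < (1 / lam) * Real.cosh (K + A w) * Real.exp (B w) / Real.cosh w ∧
      0 < (1 / lam) * Real.cosh (-K + A w) * Real.exp (B w) / Real.cosh w ∧
      (1 / lam) * Real.cosh (K + A w) * Real.exp (B w) / Real.cosh w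
          + (1 / lam) * Real.cosh (-K + A w) * Real.exp (B w) / Real.cosh w = 1 := by
  intro w
  have hc1 : 0 < Real.cosh (w + J) := Real.cosh_pos _
  have hc2 : 0 < Real.cosh (w - J) := Real.cosh_pos _
  have hcw : 0 < Real.cosh w := Real.cosh_pos _
  have hcJ : 0 < Real.cosh J := Real.cosh_pos _
  have hcK : 0 < Real.cosh K := Real.cosh_pos _
  have hlampos : 0 < lam := by rw [hlam]; positivity
  have hAB : Real.exp (A w + B w) = 2 * Real.cosh (w + J) := by
    rw [hA, hB]; exact aux_exp_sum _ _ hc1 hc2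
  have hBA : Real.exp (B w - A w) = 2 * Real.cosh (w - J) := by
    rw [hA, hB]; exact aux_exp_diff _ _ hc1 hc2
  have hcoshsum : Real.cosh (w + J) + Real.cosh (w - J) = 2 * Real.cosh w * Real.cosh J := by
    rw [Real.cosh_add, Real.cosh_sub]; ring
  have hcoshK : Real.exp K + Real.exp (-K) = 2 * Real.cosh K := by
    rw [Real.cosh_eq]; ring
  have e1 : Real.cosh (K + A w) * Real.exp (B w)
      = (Real.exp K * (2 * Real.cosh (w + J)) + Real.exp (-K) * (2 * Real.cosh (w - J))) / 2 := by
    rw [Real.cosh_eq, ← hAB, ← hBA, ← Real.exp_add, ← Real.exp_add, div_mul_eq_mul_div,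
      add_mul, ← Real.exp_add, ← Real.exp_add]
    ring_nf
  have e2 : Real.cosh (-K + A w) * Real.exp (B w)
      = (Real.exp (-K) * (2 * Real.cosh (w + J)) + Real.exp K * (2 * Real.cosh (w - J))) / 2 := by
    rw [Real.cosh_eq, ← hAB, ← hBA, ← Real.exp_add, ← Real.exp_add, div_mul_eq_mul_div,
      add_mul, ← Real.exp_add, ← Real.exp_add]
    ring_nf
  have main : (Real.cosh (K + A w) + Real.cosh (-K + A w)) * Real.exp (B w)
      = lam * Real.cosh w := by
    rw [add_mul, e1, e2, hlam]
    nlinarith [hcoshsum, hcoshK]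
  have hex : 0 < Real.exp (B w) := Real.exp_pos _
  have hk1 : 0 < Real.cosh (K + A w) := Real.cosh_pos _
  have hk2 : 0 < Real.cosh (-K + A w) := Real.cosh_pos _
  refine ⟨main, by positivity, by positivity, ?_⟩
  field_simp
  nlinarith [main]
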